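/- Suppose a function-valued 2×2 matrix L(λ) satisfies the Sklyanin quadratic Poisson algebra {L_a(λ), L_b(μ)} = [r(λ−μ), L_a(λ)L_b(μ)] with a skew-symmetric r-matrix, and k⁺, k⁻ are constant matrices Poisson-commuting with L and satisfying the classical reflection equations. Then the double-row transfer matrix 𝔟(λ) = tr(k⁺(λ) L(λ) k⁻(λ) L(−λ)⁻¹) satisfies {𝔟(λ), 𝔟(μ)} = 0. -/

import Mathlib

open Matrix Kronecker

section

variable {A : Type*} [CommRing A]

/-- Entrywise Poisson bracket of two 2×2 matrices in auxiliary-space notation: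
    {X_a, Y_b} = Σ {X_ij, Y_kl} E_ij ⊗ E_kl. -/
def matPB (pb : A → A → A) (X Y : Matrix (Fin 2) (Fin 2) A) :
    Matrix (Fin 2 × Fin 2) (Fin 2 × Fin 2) A :=
  fun ik jl => pb (X ik.1 jl.1) (Y ik.2 jl.2)

/-- The permutation operator on the two auxiliary spaces. -/
def PswapA : Matrix (Fin 2 × Fin 2) (Fin 2 × Fin 2) A :=
  fun ij kl => if ij.1 = kl.2 ∧ ij.2 = kl.1 then 1 else 0

/-- Embedding of an operator on the two auxiliary spaces into factors 1,2 of a triple product. -/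
def emb12 (M : Matrix (Fin 2 × Fin 2) (Fin 2 × Fin 2) A) :
    Matrix (Fin 2 × Fin 2 × Fin 2) (Fin 2 × Fin 2 × Fin 2) A :=
  fun i j => M (i.1, i.2.1) (j.1, j.2.1) * (if i.2.2 = j.2.2 then 1 else 0)

def emb13 (M : Matrix (Fin 2 × Fin 2) (Fin 2 × Fin 2) A) :
    Matrix (Fin 2 × Fin 2 × Fin 2) (Fin 2 × Fin 2 × Fin 2) A :=
  fun i j => M (i.1, i.2.2) (j.1, j.2.2) * (if i.2.1 = j.2.1 then 1 else 0)

def emb23 (M : Matrix (Fin 2 × Fin 2) (Fin 2 × Fin 2) A) :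
    Matrix (Fin 2 × Fin 2 × Fin 2) (Fin 2 × Fin 2 × Fin 2) A :=
  fun i j => M (i.2.1, i.2.2) (j.2.1, j.2.2) * (if i.1 = j.1 then 1 else 0)

/-! By the Leibniz rule and the Sklyanin bracket of `L` (which determines the brackets of
`L⁻¹`), the double-row monodromy `𝔘(λ) = L(λ) k⁻(λ) L(-λ)⁻¹` satisfies the classical reflection
algebra: `{𝔘₁(λ), 𝔘₂(μ)}` is the reflection-algebra expression in `𝔘(λ), 𝔘(μ)`, corrected by the
reflection equation of `k⁻` conjugated by `L₁(λ) L₂(μ)`, which vanishes. As `k⁺` Poisson-commutes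
with everything, `{𝔟(λ), 𝔟(μ)} = tr (k⁺₁(λ) k⁺₂(μ) {𝔘₁(λ), 𝔘₂(μ)})`, and cyclicity of the trace
moves `k⁺₁ k⁺₂` across the r-matrices, leaving the reflection equation of `k⁺` paired with
`𝔘₁ 𝔘₂`. -/

theorem kronecker_mul_kronecker_mul {n : Type*} [Fintype n] (B C D E : Matrix n n A)
    {ι : Type*} (M : Matrix (n × n) ι A) :
    (B ⊗ₖ C) * ((D ⊗ₖ E) * M) = (B * D) ⊗ₖ (C * E) * M := by
  rw [← Matrix.mul_assoc, ← Matrix.mul_kronecker_mul]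

theorem trace_mul_mul_eq_of_mul_eq {n : Type*} [Fintype n] {P Q P' Q' : Matrix n n A}
    (h : Q * P = Q' * P') (M : Matrix n n A) :
    (P * M * Q).trace = (P' * M * Q').trace := by
  rw [Matrix.trace_mul_cycle, h, ← Matrix.trace_mul_cycle]

structure IsBiderivation (pb : A → A → A) : Prop where
  add_left : ∀ a b c : A, pb (a + b) c = pb a c + pb b c
  add_right : ∀ a b c : A, pb a (b + c) = pb a b + pb a c
  mul_left : ∀ a b c : A, pb (a * b) c = pb a c * b + a * pb b c
  mul_right : ∀ a b c : A, pb a (b * c) = pb a b * c + b * pb a c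

namespace IsBiderivation

variable {pb : A → A → A}

theorem sum_left (hpb : IsBiderivation pb) {ι : Type*} (s : Finset ι) (f : ι → A) (c : A) :
    pb (∑ i ∈ s, f i) c = ∑ i ∈ s, pb (f i) c :=
  map_sum (AddMonoidHom.mk' (pb · c) (hpb.add_left · · c)) f s

theorem sum_right (hpb : IsBiderivation pb) {ι : Type*} (s : Finset ι) (f : ι → A) (a : A) :
    pb a (∑ i ∈ s, f i) = ∑ i ∈ s, pb a (f i) :=
  map_sum (AddMonoidHom.mk' (pb a) (hpb.add_right a)) f s

theorem zero_left (hpb : IsBiderivation pb) (c : A) : pb 0 c = 0 :=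
  map_zero (AddMonoidHom.mk' (pb · c) (hpb.add_left · · c))

theorem zero_right (hpb : IsBiderivation pb) (a : A) : pb a 0 = 0 :=
  map_zero (AddMonoidHom.mk' (pb a) (hpb.add_right a))

theorem one_left (hpb : IsBiderivation pb) (c : A) : pb 1 c = 0 := by
  simpa using hpb.mul_left 1 1 c

theorem one_right (hpb : IsBiderivation pb) (a : A) : pb a 1 = 0 := by
  simpa using hpb.mul_right a 1 1

theorem trace_matPB (hpb : IsBiderivation pb) (X Y : Matrix (Fin 2) (Fin 2) A) :
    pb X.trace Y.trace = (matPB pb X Y).trace := by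
  simp only [Matrix.trace, Matrix.diag, matPB, Fintype.sum_prod_type, hpb.sum_left,
    hpb.sum_right]

theorem matPB_mul_left (hpb : IsBiderivation pb) (X Y Z : Matrix (Fin 2) (Fin 2) A) :
    matPB pb (X * Y) Z = (X ⊗ₖ 1) * matPB pb Y Z + matPB pb X Z * (Y ⊗ₖ 1) := by
  ext ⟨i, k⟩ ⟨j, l⟩
  simp only [matPB, Matrix.add_apply, Matrix.mul_apply, Fintype.sum_prod_type,
    Matrix.kroneckerMap_apply, Matrix.one_apply, hpb.sum_left, hpb.mul_left,
    Finset.sum_add_distrib]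
  rw [add_comm]
  congr 1 <;> simp [mul_ite, ite_mul]

theorem matPB_mul_right (hpb : IsBiderivation pb) (X Y Z : Matrix (Fin 2) (Fin 2) A) :
    matPB pb X (Y * Z) = (1 ⊗ₖ Y) * matPB pb X Z + matPB pb X Y * (1 ⊗ₖ Z) := by
  ext ⟨i, k⟩ ⟨j, l⟩
  simp only [matPB, Matrix.add_apply, Matrix.mul_apply, Fintype.sum_prod_type,
    Matrix.kroneckerMap_apply, Matrix.one_apply, hpb.sum_right, hpb.mul_right,
    Finset.sum_add_distrib]
  rw [add_comm]
  congr 1 <;> simp [mul_ite, ite_mul]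

theorem matPB_one_left (hpb : IsBiderivation pb) (Z : Matrix (Fin 2) (Fin 2) A) :
    matPB pb 1 Z = 0 := by
  ext ik jl
  by_cases h : ik.1 = jl.1 <;> simp [matPB, Matrix.one_apply, h, hpb.one_left, hpb.zero_left]

theorem matPB_one_right (hpb : IsBiderivation pb) (Z : Matrix (Fin 2) (Fin 2) A) :
    matPB pb Z 1 = 0 := by
  ext ik jl
  by_cases h : ik.2 = jl.2 <;> simp [matPB, Matrix.one_apply, h, hpb.one_right, hpb.zero_right]

theorem matPB_inv_left (hpb : IsBiderivation pb) {X Xi : Matrix (Fin 2) (Fin 2) A}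
    (h : X * Xi = 1) (h' : Xi * X = 1) (Z : Matrix (Fin 2) (Fin 2) A) :
    matPB pb Xi Z = -((Xi ⊗ₖ 1) * matPB pb X Z * (Xi ⊗ₖ 1)) := by
  calc matPB pb Xi Z = (Xi ⊗ₖ 1) * ((X ⊗ₖ 1) * matPB pb Xi Z) := by
        rw [kronecker_mul_kronecker_mul, h', Matrix.one_mul, Matrix.one_kronecker_one,
          Matrix.one_mul]
    _ = (Xi ⊗ₖ 1) * (matPB pb (X * Xi) Z - matPB pb X Z * (Xi ⊗ₖ 1)) := by
        rw [hpb.matPB_mul_left]; abel_nf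
    _ = _ := by rw [h, hpb.matPB_one_left, zero_sub, Matrix.mul_neg, Matrix.mul_assoc]

theorem matPB_inv_right (hpb : IsBiderivation pb) {Y Yi : Matrix (Fin 2) (Fin 2) A}
    (h : Y * Yi = 1) (h' : Yi * Y = 1) (Z : Matrix (Fin 2) (Fin 2) A) :
    matPB pb Z Yi = -((1 ⊗ₖ Yi) * matPB pb Z Y * (1 ⊗ₖ Yi)) := by
  calc matPB pb Z Yi = (1 ⊗ₖ Yi) * ((1 ⊗ₖ Y) * matPB pb Z Yi) := by
        rw [kronecker_mul_kronecker_mul, h', Matrix.one_mul, Matrix.one_kronecker_one,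
          Matrix.one_mul]
    _ = (1 ⊗ₖ Yi) * (matPB pb Z (Y * Yi) - matPB pb Z Y * (1 ⊗ₖ Yi)) := by
        rw [hpb.matPB_mul_right]; abel_nf
    _ = _ := by rw [h, hpb.matPB_one_right, zero_sub, Matrix.mul_neg, Matrix.mul_assoc]

theorem matPB_inv_right_of_eq_commutator (hpb : IsBiderivation pb)
    {X Y Yi : Matrix (Fin 2) (Fin 2) A} (h : Y * Yi = 1) (h' : Yi * Y = 1)
    {ρ : Matrix (Fin 2 × Fin 2) (Fin 2 × Fin 2) A}
    (hXY : matPB pb X Y = ρ * ((X ⊗ₖ 1) * (1 ⊗ₖ Y)) - ((X ⊗ₖ 1) * (1 ⊗ₖ Y)) * ρ) :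
    matPB pb X Yi = (X ⊗ₖ 1) * ρ * (1 ⊗ₖ Yi) - (1 ⊗ₖ Yi) * ρ * (X ⊗ₖ 1) := by
  rw [hpb.matPB_inv_right h h', hXY]
  simp only [Matrix.mul_sub, Matrix.sub_mul, neg_sub, Matrix.mul_assoc,
    kronecker_mul_kronecker_mul, ← Matrix.mul_kronecker_mul, Matrix.one_mul, Matrix.mul_one,
    h, h']

theorem matPB_inv_left_of_eq_commutator (hpb : IsBiderivation pb)
    {X Xi Y : Matrix (Fin 2) (Fin 2) A} (h : X * Xi = 1) (h' : Xi * X = 1)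
    {ρ : Matrix (Fin 2 × Fin 2) (Fin 2 × Fin 2) A}
    (hXY : matPB pb X Y = ρ * ((X ⊗ₖ 1) * (1 ⊗ₖ Y)) - ((X ⊗ₖ 1) * (1 ⊗ₖ Y)) * ρ) :
    matPB pb Xi Y = (1 ⊗ₖ Y) * ρ * (Xi ⊗ₖ 1) - (Xi ⊗ₖ 1) * ρ * (1 ⊗ₖ Y) := by
  rw [hpb.matPB_inv_left h h', hXY]
  simp only [Matrix.mul_sub, Matrix.sub_mul, neg_sub, Matrix.mul_assoc,
    kronecker_mul_kronecker_mul, ← Matrix.mul_kronecker_mul, Matrix.one_mul, Matrix.mul_one,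
    h, h']

theorem matPB_inv_inv_of_eq_commutator (hpb : IsBiderivation pb)
    {X Xi Y Yi : Matrix (Fin 2) (Fin 2) A} (hX : X * Xi = 1) (hX' : Xi * X = 1)
    (hY : Y * Yi = 1) (hY' : Yi * Y = 1)
    {ρ : Matrix (Fin 2 × Fin 2) (Fin 2 × Fin 2) A}
    (hXY : matPB pb X Y = ρ * ((X ⊗ₖ 1) * (1 ⊗ₖ Y)) - ((X ⊗ₖ 1) * (1 ⊗ₖ Y)) * ρ) :
    matPB pb Xi Yi = ((Xi ⊗ₖ 1) * (1 ⊗ₖ Yi)) * ρ - ρ * ((Xi ⊗ₖ 1) * (1 ⊗ₖ Yi)) := by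
  rw [hpb.matPB_inv_left hX hX', hpb.matPB_inv_right_of_eq_commutator hY hY' hXY]
  simp only [Matrix.mul_sub, Matrix.sub_mul, neg_sub, Matrix.mul_assoc,
    kronecker_mul_kronecker_mul, ← Matrix.mul_kronecker_mul, Matrix.one_mul, Matrix.mul_one,
    Matrix.one_kronecker_one, hX, hX']

theorem matPB_mul_mul_of_eq_zero (hpb : IsBiderivation pb)
    {K J X Y : Matrix (Fin 2) (Fin 2) A} (hKJ : matPB pb K J = 0) (hKY : matPB pb K Y = 0)
    (hXJ : matPB pb X J = 0) :
    matPB pb (K * X) (J * Y) = (K ⊗ₖ 1) * (1 ⊗ₖ J) * matPB pb X Y := by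
  simp only [hpb.matPB_mul_left, hpb.matPB_mul_right, hKJ, hKY, hXJ, Matrix.mul_zero,
    Matrix.zero_mul, add_zero, Matrix.mul_assoc]

end IsBiderivation

theorem matPB_eq_zero_comm {pb : A → A → A} (hanti : ∀ a b : A, pb a b = - pb b a)
    {X Y : Matrix (Fin 2) (Fin 2) A} (h : matPB pb X Y = 0) : matPB pb Y X = 0 := by
  ext ⟨i, k⟩ ⟨j, l⟩
  simpa [matPB, hanti (Y i j)] using congrFun (congrFun h (k, i)) (l, j)


theorem PswapA_mul_self : (PswapA : Matrix (Fin 2 × Fin 2) (Fin 2 × Fin 2) A) * PswapA = 1 := by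
  ext ⟨i, j⟩ ⟨k, l⟩
  simp only [PswapA, Matrix.mul_apply, Matrix.one_apply, Fintype.sum_prod_type, Prod.mk.injEq,
    ite_and, ite_mul, one_mul, zero_mul, Finset.sum_ite_eq, Finset.mem_univ, if_true]
  by_cases hik : i = k <;> by_cases hjl : j = l <;> simp [hik, hjl]

theorem PswapA_conj_conj (M : Matrix (Fin 2 × Fin 2) (Fin 2 × Fin 2) A) :
    PswapA * (PswapA * M * PswapA) * PswapA = M := by
  simp only [← Matrix.mul_assoc, PswapA_mul_self, Matrix.one_mul]
  rw [Matrix.mul_assoc, PswapA_mul_self, Matrix.mul_one]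

theorem eq_neg_PswapA_conj_of_skew {r : ℝ → Matrix (Fin 2 × Fin 2) (Fin 2 × Fin 2) A}
    (hskew : ∀ l : ℝ, r l = - (PswapA * r (-l) * PswapA)) {x y : ℝ} (h : y = -x) :
    r y = -(PswapA * r x * PswapA) := by
  rw [h, hskew, neg_neg]

/-- Right-hand side of the classical reflection algebra. With `ρ = r (λ - μ)` and
`σ = r (λ + μ)`, the reflection equation for `k⁻` says it vanishes at `(k⁻ λ, k⁻ μ)`; the one for
`k⁺` is the same equation for the swapped r-matrix `P r P`. -/
def reflectionBracket (ρ σ : Matrix (Fin 2 × Fin 2) (Fin 2 × Fin 2) A)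
    (X Y : Matrix (Fin 2) (Fin 2) A) : Matrix (Fin 2 × Fin 2) (Fin 2 × Fin 2) A :=
  ρ * (X ⊗ₖ 1) * (1 ⊗ₖ Y) - (X ⊗ₖ 1) * (1 ⊗ₖ Y) * (PswapA * ρ * PswapA)
    + (X ⊗ₖ 1) * (PswapA * σ * PswapA) * (1 ⊗ₖ Y) - (1 ⊗ₖ Y) * σ * (X ⊗ₖ 1)

theorem trace_mul_reflectionBracket (ρ σ : Matrix (Fin 2 × Fin 2) (Fin 2 × Fin 2) A)
    (K J X Y : Matrix (Fin 2) (Fin 2) A) :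
    ((K ⊗ₖ 1) * (1 ⊗ₖ J) * reflectionBracket ρ σ X Y).trace
      = -(reflectionBracket (PswapA * ρ * PswapA) (PswapA * σ * PswapA) K J
          * ((X ⊗ₖ 1) * (1 ⊗ₖ Y))).trace := by
  -- cyclic permutations, using that factors acting on different tensor slots commute
  have hρ := trace_mul_mul_eq_of_mul_eq (Q := 1) (P' := 1)
    (P := (K ⊗ₖ 1) * (1 ⊗ₖ J) * (X ⊗ₖ 1) * (1 ⊗ₖ Y))
    (Q' := (K ⊗ₖ 1) * (1 ⊗ₖ J) * (X ⊗ₖ 1) * (1 ⊗ₖ Y)) (by simp) (PswapA * ρ * PswapA)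
  have hσ' := trace_mul_mul_eq_of_mul_eq (P := (K ⊗ₖ 1) * (1 ⊗ₖ J) * (X ⊗ₖ 1)) (Q := 1 ⊗ₖ Y)
    (P' := 1 ⊗ₖ J) (Q' := (K ⊗ₖ 1) * (X ⊗ₖ 1) * (1 ⊗ₖ Y))
    (by simp only [← Matrix.mul_kronecker_mul, Matrix.one_mul, Matrix.mul_one])
    (PswapA * σ * PswapA)
  have hσ := trace_mul_mul_eq_of_mul_eq (P := (K ⊗ₖ 1) * (1 ⊗ₖ J) * (1 ⊗ₖ Y)) (Q := X ⊗ₖ 1)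
    (P' := K ⊗ₖ 1) (Q' := (1 ⊗ₖ J) * (X ⊗ₖ 1) * (1 ⊗ₖ Y))
    (by simp only [← Matrix.mul_kronecker_mul, Matrix.one_mul, Matrix.mul_one]) σ
  simp only [Matrix.mul_one, Matrix.one_mul, Matrix.mul_assoc] at hρ hσ' hσ
  simp only [reflectionBracket]
  rw [PswapA_conj_conj, PswapA_conj_conj]
  simp only [Matrix.mul_add, Matrix.add_mul, Matrix.mul_sub, Matrix.sub_mul, Matrix.trace_add,
    Matrix.trace_sub, Matrix.mul_assoc]
  rw [hρ, hσ', hσ]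
  ring

def IsSklyanin (pb : A → A → A) (r : ℝ → Matrix (Fin 2 × Fin 2) (Fin 2 × Fin 2) A)
    (L : ℝ → Matrix (Fin 2) (Fin 2) A) : Prop :=
  ∀ l m : ℝ, matPB pb (L l) (L m)
    = r (l - m) * ((L l ⊗ₖ 1) * (1 ⊗ₖ L m)) - ((L l ⊗ₖ 1) * (1 ⊗ₖ L m)) * r (l - m)

def doubleRow (L Linv k : ℝ → Matrix (Fin 2) (Fin 2) A) (l : ℝ) : Matrix (Fin 2) (Fin 2) A :=
  L l * k l * Linv (-l)

theorem IsBiderivation.matPB_doubleRow_eq_zero {pb : A → A → A} (hpb : IsBiderivation pb)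
    {L Linv : ℝ → Matrix (Fin 2) (Fin 2) A} (hinv : ∀ l, L l * Linv l = 1 ∧ Linv l * L l = 1)
    {k : ℝ → Matrix (Fin 2) (Fin 2) A} {X : Matrix (Fin 2) (Fin 2) A}
    (hXL : ∀ m, matPB pb X (L m) = 0) (hXk : ∀ m, matPB pb X (k m) = 0) (m : ℝ) :
    matPB pb X (doubleRow L Linv k m) = 0 := by
  simp only [doubleRow, hpb.matPB_mul_right, hpb.matPB_inv_right (hinv _).1 (hinv _).2, hXL,
    hXk, Matrix.mul_zero, Matrix.zero_mul, neg_zero, add_zero]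

theorem matPB_doubleRow_doubleRow {pb : A → A → A} (hpb : IsBiderivation pb)
    (hanti : ∀ a b : A, pb a b = - pb b a)
    {r : ℝ → Matrix (Fin 2 × Fin 2) (Fin 2 × Fin 2) A}
    (hskew : ∀ l : ℝ, r l = - (PswapA * r (-l) * PswapA))
    {L Linv : ℝ → Matrix (Fin 2) (Fin 2) A} (hinv : ∀ l, L l * Linv l = 1 ∧ Linv l * L l = 1)
    (hSk : IsSklyanin pb r L) {k : ℝ → Matrix (Fin 2) (Fin 2) A}
    (hkk : ∀ l m : ℝ, matPB pb (k l) (k m) = 0) (hkL : ∀ l m : ℝ, matPB pb (k l) (L m) = 0)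
    (l m : ℝ) :
    matPB pb (doubleRow L Linv k l) (doubleRow L Linv k m)
      = reflectionBracket (r (l - m)) (r (l + m)) (doubleRow L Linv k l) (doubleRow L Linv k m)
        - (L l ⊗ₖ L m) * reflectionBracket (r (l - m)) (r (l + m)) (k l) (k m)
          * (Linv (-l) ⊗ₖ Linv (-m)) := by
  have hLk : ∀ l m, matPB pb (L l) (k m) = 0 := fun l m => matPB_eq_zero_comm hanti (hkL m l)
  have hkLinv : matPB pb (k l) (Linv (-m)) = 0 := by
    rw [hpb.matPB_inv_right (hinv _).1 (hinv _).2, hkL]; simp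
  have hLinvk : matPB pb (Linv (-l)) (k m) = 0 := by
    rw [hpb.matPB_inv_left (hinv _).1 (hinv _).2, hLk]; simp
  have hLLinv := hpb.matPB_inv_right_of_eq_commutator (hinv (-m)).1 (hinv (-m)).2 (hSk l (-m))
  have hLinvL := hpb.matPB_inv_left_of_eq_commutator (hinv (-l)).1 (hinv (-l)).2 (hSk (-l) m)
  have hLinvLinv := hpb.matPB_inv_inv_of_eq_commutator (hinv (-l)).1 (hinv (-l)).2
    (hinv (-m)).1 (hinv (-m)).2 (hSk (-l) (-m))
  -- skewness turns the `r (-λ - μ)` and `r (μ - λ)` coming from `L(-·)⁻¹` into `-(P r P)`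
  rw [sub_neg_eq_add] at hLLinv
  rw [eq_neg_PswapA_conj_of_skew hskew (x := l + m) (by ring)] at hLinvL
  rw [eq_neg_PswapA_conj_of_skew hskew (x := l - m) (by ring)] at hLinvLinv
  simp only [doubleRow, hpb.matPB_mul_left, hpb.matPB_mul_right, hSk l m, hLLinv, hLinvL,
    hLinvLinv, hkk, hkL, hLk, hkLinv, hLinvk, Matrix.mul_zero, Matrix.zero_mul, add_zero,
    zero_add]
  simp only [reflectionBracket, Matrix.mul_add, Matrix.add_mul, Matrix.mul_sub,
    Matrix.sub_mul, Matrix.mul_neg, Matrix.neg_mul, Matrix.mul_assoc,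
    kronecker_mul_kronecker_mul, ← Matrix.mul_kronecker_mul, Matrix.one_mul, Matrix.mul_one]
  abel

theorem doubleRow_transfer_Poisson_commute_general
    (pb : A → A → A)
    -- Poisson algebra structure (biderivation, antisymmetric)
    (hal : ∀ a b c : A, pb (a + b) c = pb a c + pb b c)
    (har : ∀ a b c : A, pb a (b + c) = pb a b + pb a c)
    (hll : ∀ a b c : A, pb (a * b) c = pb a c * b + a * pb b c)
    (hlr : ∀ a b c : A, pb a (b * c) = pb a b * c + b * pb a c)
    (hanti : ∀ a b : A, pb a b = - pb b a)
    -- the r-matrix: skew-symmetric and solution of the classical Yang–Baxter equation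
    (r : ℝ → Matrix (Fin 2 × Fin 2) (Fin 2 × Fin 2) A)
    (hskew : ∀ l : ℝ, r l = - (PswapA * r (-l) * PswapA))
    -- the monodromy matrix, invertible, satisfying the Sklyanin quadratic algebra
    (L Linv : ℝ → Matrix (Fin 2) (Fin 2) A)
    (hinv : ∀ l, L l * Linv l = 1 ∧ Linv l * L l = 1)
    (hSk : ∀ l m : ℝ, matPB pb (L l) (L m)
        = r (l - m) * ((L l ⊗ₖ (1 : Matrix (Fin 2) (Fin 2) A))
            * ((1 : Matrix (Fin 2) (Fin 2) A) ⊗ₖ L m))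
          - ((L l ⊗ₖ (1 : Matrix (Fin 2) (Fin 2) A))
            * ((1 : Matrix (Fin 2) (Fin 2) A) ⊗ₖ L m)) * r (l - m))
    -- the constant boundary matrices: Poisson commuting among themselves and with L
    (kp km : ℝ → Matrix (Fin 2) (Fin 2) A)
    (hkmkm : ∀ l m : ℝ, matPB pb (km l) (km m) = 0)
    (hkpkp : ∀ l m : ℝ, matPB pb (kp l) (kp m) = 0)
    (hkmkp : ∀ l m : ℝ, matPB pb (km l) (kp m) = 0)
    (hkmL : ∀ l m : ℝ, matPB pb (km l) (L m) = 0)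
    (hkpL : ∀ l m : ℝ, matPB pb (kp l) (L m) = 0)
    -- the classical reflection equations for k⁻ and k⁺
    (hreflm : ∀ l m : ℝ,
      r (l - m) * (km l ⊗ₖ (1 : Matrix (Fin 2) (Fin 2) A))
          * ((1 : Matrix (Fin 2) (Fin 2) A) ⊗ₖ km m)
      - (km l ⊗ₖ (1 : Matrix (Fin 2) (Fin 2) A))
          * ((1 : Matrix (Fin 2) (Fin 2) A) ⊗ₖ km m) * (PswapA * r (l - m) * PswapA)
      + (km l ⊗ₖ (1 : Matrix (Fin 2) (Fin 2) A)) * (PswapA * r (l + m) * PswapA)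
          * ((1 : Matrix (Fin 2) (Fin 2) A) ⊗ₖ km m)
      - ((1 : Matrix (Fin 2) (Fin 2) A) ⊗ₖ km m) * r (l + m)
          * (km l ⊗ₖ (1 : Matrix (Fin 2) (Fin 2) A)) = 0)
    (hreflp : ∀ l m : ℝ,
      (PswapA * r (l - m) * PswapA) * (kp l ⊗ₖ (1 : Matrix (Fin 2) (Fin 2) A))
          * ((1 : Matrix (Fin 2) (Fin 2) A) ⊗ₖ kp m)
      - (kp l ⊗ₖ (1 : Matrix (Fin 2) (Fin 2) A))
          * ((1 : Matrix (Fin 2) (Fin 2) A) ⊗ₖ kp m) * r (l - m)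
      + (kp l ⊗ₖ (1 : Matrix (Fin 2) (Fin 2) A)) * r (l + m)
          * ((1 : Matrix (Fin 2) (Fin 2) A) ⊗ₖ kp m)
      - ((1 : Matrix (Fin 2) (Fin 2) A) ⊗ₖ kp m) * (PswapA * r (l + m) * PswapA)
          * (kp l ⊗ₖ (1 : Matrix (Fin 2) (Fin 2) A)) = 0) :
    ∀ l m : ℝ,
      pb (Matrix.trace (kp l * L l * km l * Linv (-l)))
         (Matrix.trace (kp m * L m * km m * Linv (-m))) = 0 := by
  intro l m
  have hpb : IsBiderivation pb := ⟨hal, har, hll, hlr⟩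
  have hkpT : ∀ l m, matPB pb (kp l) (doubleRow L Linv km m) = 0 := fun l =>
    hpb.matPB_doubleRow_eq_zero hinv (hkpL l) fun m => matPB_eq_zero_comm hanti (hkmkp m l)
  have hkp : ∀ l, kp l * L l * km l * Linv (-l) = kp l * doubleRow L Linv km l := fun l => by
    simp only [doubleRow, Matrix.mul_assoc]
  have hreflm' : reflectionBracket (r (l - m)) (r (l + m)) (km l) (km m) = 0 := hreflm l m
  have hreflp' : reflectionBracket (PswapA * r (l - m) * PswapA) (PswapA * r (l + m) * PswapA)
      (kp l) (kp m) = 0 := by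
    simpa only [reflectionBracket, PswapA_conj_conj] using hreflp l m
  rw [hkp, hkp, hpb.trace_matPB, hpb.matPB_mul_mul_of_eq_zero (hkpkp l m) (hkpT l m)
      (matPB_eq_zero_comm hanti (hkpT m l)),
    matPB_doubleRow_doubleRow hpb hanti hskew hinv hSk hkmkm hkmL, hreflm', Matrix.mul_zero,
    Matrix.zero_mul, sub_zero, trace_mul_reflectionBracket, hreflp', Matrix.zero_mul,
    Matrix.trace_zero, neg_zero]

/-- Poisson commutativity of the double-row transfer matrix
    𝔟(λ) = tr(k⁺(λ) L(λ) k⁻(λ) L(−λ)⁻¹). -/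
theorem doubleRow_transfer_Poisson_commute
    (pb : A → A → A)
    -- Poisson algebra structure (biderivation, antisymmetric)
    (hal : ∀ a b c : A, pb (a + b) c = pb a c + pb b c)
    (har : ∀ a b c : A, pb a (b + c) = pb a b + pb a c)
    (hll : ∀ a b c : A, pb (a * b) c = pb a c * b + a * pb b c)
    (hlr : ∀ a b c : A, pb a (b * c) = pb a b * c + b * pb a c)
    (hanti : ∀ a b : A, pb a b = - pb b a)
    -- the r-matrix: skew-symmetric and solution of the classical Yang–Baxter equation
    (r : ℝ → Matrix (Fin 2 × Fin 2) (Fin 2 × Fin 2) A)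
    (hskew : ∀ l : ℝ, r l = - (PswapA * r (-l) * PswapA))
    (hCYBE : ∀ l m n : ℝ,
      (emb13 (r (l - n)) * emb23 (r (m - n)) - emb23 (r (m - n)) * emb13 (r (l - n)))
      + (emb12 (r (l - m)) * emb13 (r (l - n)) - emb13 (r (l - n)) * emb12 (r (l - m)))
      + (emb12 (r (l - m)) * emb23 (r (m - n)) - emb23 (r (m - n)) * emb12 (r (l - m))) = 0)
    -- the monodromy matrix, invertible, satisfying the Sklyanin quadratic algebra
    (L Linv : ℝ → Matrix (Fin 2) (Fin 2) A)
    (hinv : ∀ l, L l * Linv l = 1 ∧ Linv l * L l = 1)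
    (hSk : ∀ l m : ℝ, matPB pb (L l) (L m)
        = r (l - m) * ((L l ⊗ₖ (1 : Matrix (Fin 2) (Fin 2) A))
            * ((1 : Matrix (Fin 2) (Fin 2) A) ⊗ₖ L m))
          - ((L l ⊗ₖ (1 : Matrix (Fin 2) (Fin 2) A))
            * ((1 : Matrix (Fin 2) (Fin 2) A) ⊗ₖ L m)) * r (l - m))
    -- the constant boundary matrices: Poisson commuting among themselves and with L
    (kp km : ℝ → Matrix (Fin 2) (Fin 2) A)
    (hkmkm : ∀ l m : ℝ, matPB pb (km l) (km m) = 0)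
    (hkpkp : ∀ l m : ℝ, matPB pb (kp l) (kp m) = 0)
    (hkmkp : ∀ l m : ℝ, matPB pb (km l) (kp m) = 0)
    (hkmL : ∀ l m : ℝ, matPB pb (km l) (L m) = 0)
    (hkpL : ∀ l m : ℝ, matPB pb (kp l) (L m) = 0)
    -- the classical reflection equations for k⁻ and k⁺
    (hreflm : ∀ l m : ℝ,
      r (l - m) * (km l ⊗ₖ (1 : Matrix (Fin 2) (Fin 2) A))
          * ((1 : Matrix (Fin 2) (Fin 2) A) ⊗ₖ km m)
      - (km l ⊗ₖ (1 : Matrix (Fin 2) (Fin 2) A))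
          * ((1 : Matrix (Fin 2) (Fin 2) A) ⊗ₖ km m) * (PswapA * r (l - m) * PswapA)
      + (km l ⊗ₖ (1 : Matrix (Fin 2) (Fin 2) A)) * (PswapA * r (l + m) * PswapA)
          * ((1 : Matrix (Fin 2) (Fin 2) A) ⊗ₖ km m)
      - ((1 : Matrix (Fin 2) (Fin 2) A) ⊗ₖ km m) * r (l + m)
          * (km l ⊗ₖ (1 : Matrix (Fin 2) (Fin 2) A)) = 0)
    (hreflp : ∀ l m : ℝ,
      (PswapA * r (l - m) * PswapA) * (kp l ⊗ₖ (1 : Matrix (Fin 2) (Fin 2) A))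
          * ((1 : Matrix (Fin 2) (Fin 2) A) ⊗ₖ kp m)
      - (kp l ⊗ₖ (1 : Matrix (Fin 2) (Fin 2) A))
          * ((1 : Matrix (Fin 2) (Fin 2) A) ⊗ₖ kp m) * r (l - m)
      + (kp l ⊗ₖ (1 : Matrix (Fin 2) (Fin 2) A)) * r (l + m)
          * ((1 : Matrix (Fin 2) (Fin 2) A) ⊗ₖ kp m)
      - ((1 : Matrix (Fin 2) (Fin 2) A) ⊗ₖ kp m) * (PswapA * r (l + m) * PswapA)
          * (kp l ⊗ₖ (1 : Matrix (Fin 2) (Fin 2) A)) = 0) :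
    ∀ l m : ℝ,
      pb (Matrix.trace (kp l * L l * km l * Linv (-l)))
         (Matrix.trace (kp m * L m * km m * Linv (-m))) = 0 :=
  doubleRow_transfer_Poisson_commute_general pb hal har hll hlr hanti r hskew L Linv hinv hSk kp km
    hkmkm hkpkp hkmkp hkmL hkpL hreflm hreflp

end
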